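/- arXiv:1707.00359 — 2 statements merged into one kernel-verified Lean document; each statement's English description precedes it below -/
import Mathlib

section
/- If a graph G is in TM(d,m), then G has linear clique-width at most m(d+1). -/
/-- Length of the longest common prefix of `f` and `g` (as strings of length `d`). -/
def prefLen {d : ℕ} (f g : Fin d → ℕ) : ℕ :=
  Nat.findGreatest (fun k => ∀ i : Fin d, (i : ℕ) < k → f i = g i) d

/-- A tree-model of `m` colours and depth `d` for the graph `G`:
a rooted tree of uniform root-to-leaf distance `d` whose leaves are exactly `V(G)`
(encoded by the injective map `f` sending each leaf to its root-to-leaf address),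
a colouring of the leaves by `m` colours, and a symmetric signature `S` such that
two distinct vertices `u,v` are adjacent iff `(col u, col v, ℓ) ∈ S`, where `2ℓ`
is the tree-distance between `u` and `v` in the tree. -/
structure TreeModel {V : Type} (G : SimpleGraph V) (d m : ℕ) where
  f : V → Fin d → ℕ
  inj : Function.Injective f
  col : V → Fin m
  S : Fin m → Fin m → ℕ → Prop
  symm : ∀ i j l, S i j l → S j i l
  adj : ∀ u v : V, u ≠ v →
    (G.Adj u v ↔ S (col u) (col v) (d - prefLen (f u) (f v)))

/-- `G ∈ TM(d,m)`. -/
def InTM (d m : ℕ) {V : Type} (G : SimpleGraph V) : Prop :=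
  Nonempty (TreeModel G d m)

/-- Linear `k`-expressions, operationally: `LinCW k n G lab` holds if the labelled graph
`(G, lab)` on vertex set `Fin n` can be built from single labelled vertices by repeatedly
(i) adding a single new labelled vertex (linear disjoint union), (ii) adding all edges
between two distinct labels, and (iii) relabelling. -/
inductive LinCW (k : ℕ) : (n : ℕ) → SimpleGraph (Fin n) → (Fin n → Fin k) → Prop
  | empty : LinCW k 0 ⊥ Fin.elim0
  | single (ℓ : Fin k) : LinCW k 1 ⊥ (fun _ => ℓ)
  | addVertex {n : ℕ} {G : SimpleGraph (Fin n)} {lab : Fin n → Fin k} (ℓ : Fin k) :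
      LinCW k n G lab →
      LinCW k (n + 1) (G.map Fin.castSucc) (Fin.snoc lab ℓ)
  | addEdges {n : ℕ} {G : SimpleGraph (Fin n)} {lab : Fin n → Fin k} (i j : Fin k)
      (hij : i ≠ j) : LinCW k n G lab →
      LinCW k n (G ⊔ SimpleGraph.fromRel (fun x y => lab x = i ∧ lab y = j)) lab
  | relabel {n : ℕ} {G : SimpleGraph (Fin n)} {lab : Fin n → Fin k} (i j : Fin k) :
      LinCW k n G lab →
      LinCW k n G (fun v => if lab v = i then j else lab v)

/-- `G` has linear clique-width at most `k`. -/
def LinCWle {V : Type} (G : SimpleGraph V) (k : ℕ) : Prop :=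
  ∃ (n : ℕ) (G' : SimpleGraph (Fin n)) (lab : Fin n → Fin k),
    LinCW k n G' lab ∧ Nonempty (G ≃g G')

/-!
List the vertices in lexicographic order of their addresses and add them one at a time. While
`u` is the last vertex added, every vertex `v` carries the label
`(colour of v, |common prefix of v and u|)`, one of `m (d + 1)` labels. For lexicographically
ordered `v ≤ u ≤ w` the common prefix of `v` and `w` is the shorter of those of `v, u` and `u, w`,
so when `w` arrives the labels are updated by the idempotent relabelling that truncates levels at
`|common prefix of u and w|`. The new vertex `w` gets level `d`, which no other vertex has, and
whether `v` is adjacent to `w` depends only on the label of `v`, so the edges at `w` are added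
label by label.
-/

section PrefLen

variable {d : ℕ}

theorem prefLen_le (f g : Fin d → ℕ) : prefLen f g ≤ d := Nat.findGreatest_le d

theorem le_prefLen_iff {f g : Fin d → ℕ} {k : ℕ} (hk : k ≤ d) :
    k ≤ prefLen f g ↔ ∀ i : Fin d, (i : ℕ) < k → f i = g i :=
  ⟨fun h i hi => Nat.findGreatest_spec (P := fun k => ∀ i : Fin d, (i : ℕ) < k → f i = g i)
    (Nat.zero_le d) (fun _ h => absurd h (Nat.not_lt_zero _)) i (hi.trans_le h),
    fun h => Nat.le_findGreatest hk h⟩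

theorem prefLen_spec (f g : Fin d → ℕ) : ∀ i : Fin d, (i : ℕ) < prefLen f g → f i = g i :=
  (le_prefLen_iff (prefLen_le f g)).1 le_rfl

theorem prefLen_comm (f g : Fin d → ℕ) : prefLen f g = prefLen g f := by
  simp only [prefLen, eq_comm]

theorem prefLen_eq_iff {f g : Fin d → ℕ} : prefLen f g = d ↔ f = g := by
  refine ⟨fun h => funext fun i => prefLen_spec f g i (h.symm ▸ i.isLt), ?_⟩
  rintro rfl
  exact le_antisymm (prefLen_le f f) ((le_prefLen_iff le_rfl).2 fun _ _ => rfl)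

theorem eq_of_toLex_le_of_toLex_le {a b c : Fin d → ℕ} (hab : toLex a ≤ toLex b)
    (hbc : toLex b ≤ toLex c) {k : ℕ} (hac : ∀ i : Fin d, (i : ℕ) < k → a i = c i) :
    ∀ i : Fin d, (i : ℕ) < k → a i = b i := by
  intro i
  induction i using WellFoundedLT.induction with
  | _ i ih =>
  intro hi
  have below : ∀ j < i, a j = b j := fun j hj => ih j hj ((Fin.lt_def.1 hj).trans hi)
  rcases lt_trichotomy (a i) (b i) with h | h | h
  · refine absurd hbc (not_le.2 ⟨i, fun j hj => ?_, (hac i hi).symm.trans_lt h⟩)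
    exact (hac j ((Fin.lt_def.1 hj).trans hi)).symm.trans (below j hj)
  · exact h
  · exact absurd hab (not_le.2 ⟨i, fun j hj => (below j hj).symm, h⟩)

theorem prefLen_eq_min_of_toLex_le {a b c : Fin d → ℕ} (hab : toLex a ≤ toLex b)
    (hbc : toLex b ≤ toLex c) : prefLen a c = min (prefLen a b) (prefLen b c) := by
  have hac := prefLen_spec a c
  have hab' := eq_of_toLex_le_of_toLex_le hab hbc hac
  refine le_antisymm (le_min ?_ ?_) ?_
  · exact (le_prefLen_iff (prefLen_le a c)).2 hab'
  · exact (le_prefLen_iff (prefLen_le a c)).2 fun i hi =>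
      (hab' i hi).symm.trans (hac i hi)
  · refine (le_prefLen_iff ((min_le_left _ _).trans (prefLen_le a b))).2 fun i hi => ?_
    exact (prefLen_spec a b i (hi.trans_le (min_le_left _ _))).trans
      (prefLen_spec b c i (hi.trans_le (min_le_right _ _)))

end PrefLen

section TreeModelGraph

variable {α β : Type*} {d m : ℕ}

def treeModelGraph (S : Fin m → Fin m → ℕ → Prop) (f : α → Fin d → ℕ) (col : α → Fin m) :
    SimpleGraph α :=
  SimpleGraph.fromRel fun u v => S (col u) (col v) (d - prefLen (f u) (f v))

theorem treeModelGraph_comp (S : Fin m → Fin m → ℕ → Prop) (f : β → Fin d → ℕ)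
    (col : β → Fin m) {e : α → β} (he : Function.Injective e) :
    treeModelGraph S (f ∘ e) (col ∘ e) = (treeModelGraph S f col).comap e := by
  ext u v
  simp [treeModelGraph, he.ne_iff]

theorem TreeModel.eq_treeModelGraph {V : Type} {G : SimpleGraph V} (tm : TreeModel G d m) :
    G = treeModelGraph tm.S tm.f tm.col := by
  ext u v
  simp only [treeModelGraph, SimpleGraph.fromRel_adj]
  constructor
  · exact fun h => ⟨h.ne, Or.inl ((tm.adj u v h.ne).1 h)⟩
  · rintro ⟨huv, h | h⟩
    · exact (tm.adj u v huv).2 h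
    · exact ((tm.adj v u huv.symm).2 h).symm

end TreeModelGraph

theorem SimpleGraph.map_comap_castSucc_sup_fromRel {n : ℕ} (H : SimpleGraph (Fin (n + 1))) :
    (H.comap Fin.castSucc).map Fin.castSucc ⊔ fromRel (fun x y => H.Adj x y ∧ y = Fin.last n)
      = H := by
  ext u v
  simp only [sup_adj, map_adj', comap_adj, fromRel_adj]
  constructor
  · rintro (⟨-, u', v', h, rfl, rfl⟩ | ⟨-, ⟨h, -⟩ | ⟨h, -⟩⟩)
    exacts [h, h, h.symm]
  · intro h
    rcases Fin.eq_castSucc_or_eq_last u with ⟨u', rfl⟩ | rfl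
    · rcases Fin.eq_castSucc_or_eq_last v with ⟨v', rfl⟩ | rfl
      · exact Or.inl ⟨h.ne, u', v', h, rfl, rfl⟩
      · exact Or.inr ⟨h.ne, Or.inl ⟨h, rfl⟩⟩
    · exact Or.inr ⟨h.ne, Or.inr ⟨h.symm, rfl⟩⟩

namespace LinCW

variable {k n : ℕ} {G : SimpleGraph (Fin n)} {lab : Fin n → Fin k}

/-- Relabel each `i` to `r i` in turn; by idempotence no later step moves a relabelled vertex. -/
theorem relabel_of_idempotent (r : Fin k → Fin k) (hr : ∀ i, r (r i) = r i)
    (h : LinCW k n G lab) : LinCW k n G (r ∘ lab) := by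
  classical
  suffices H : ∀ s : Finset (Fin k),
      LinCW k n G (fun v => if lab v ∈ s then r (lab v) else lab v) by
    simpa [Function.comp_def] using H Finset.univ
  intro s
  induction s using Finset.induction with
  | empty => simpa using h
  | @insert a s ha ih =>
    convert LinCW.relabel a (r a) ih using 1
    funext v
    by_cases h1 : lab v ∈ s <;> by_cases h2 : lab v = a <;> simp_all
    rintro rfl
    exact (hr _).symm

theorem addEdges_finset (ℓ : Fin k) (T : Finset (Fin k)) (hℓ : ℓ ∉ T) (h : LinCW k n G lab) :
    LinCW k n (G ⊔ SimpleGraph.fromRel fun x y => lab x ∈ T ∧ lab y = ℓ) lab := by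
  classical
  induction T using Finset.induction with
  | empty => convert h using 1; ext; simp
  | @insert a T ha ih =>
    rw [Finset.mem_insert, not_or] at hℓ
    convert LinCW.addEdges a ℓ (Ne.symm hℓ.1) (ih hℓ.2) using 1
    ext u v
    simp only [SimpleGraph.sup_adj, SimpleGraph.fromRel_adj, Finset.mem_insert]
    tauto

end LinCW

section Labels

variable {α : Type*} {d m : ℕ}

def colourLevel (c : Fin m) (j : Fin (d + 1)) : Fin (m * (d + 1)) := finProdFinEquiv (c, j)

theorem colourLevel_inj {c c' : Fin m} {j j' : Fin (d + 1)} :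
    colourLevel c j = colourLevel c' j' ↔ c = c' ∧ j = j' := by
  simp [colourLevel]

def truncLevel (p : Fin (d + 1)) (i : Fin (m * (d + 1))) : Fin (m * (d + 1)) :=
  colourLevel (finProdFinEquiv.symm i).1 (min (finProdFinEquiv.symm i).2 p)

theorem truncLevel_colourLevel (p : Fin (d + 1)) (c : Fin m) (j : Fin (d + 1)) :
    truncLevel p (colourLevel c j) = colourLevel c (min j p) := by
  simp [truncLevel, colourLevel]

theorem truncLevel_idem (p : Fin (d + 1)) (i : Fin (m * (d + 1))) :
    truncLevel p (truncLevel p i) = truncLevel p i := by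
  simp [truncLevel, colourLevel]

def prefLevel (f g : Fin d → ℕ) : Fin (d + 1) :=
  ⟨prefLen f g, Nat.lt_succ_of_le (prefLen_le f g)⟩

@[simp]
theorem coe_prefLevel (f g : Fin d → ℕ) : (prefLevel f g : ℕ) = prefLen f g := rfl

theorem prefLevel_eq_last_iff {f g : Fin d → ℕ} : prefLevel f g = Fin.last d ↔ f = g := by
  simp [prefLevel, Fin.ext_iff, prefLen_eq_iff]

theorem prefLevel_self (f : Fin d → ℕ) : prefLevel f f = Fin.last d :=
  prefLevel_eq_last_iff.2 rfl

noncomputable def adjLabels (S : Fin m → Fin m → ℕ → Prop) (c : Fin m) :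
    Finset (Fin (m * (d + 1))) := by
  classical
  exact Finset.univ.filter fun i =>
    let (c', j) := finProdFinEquiv.symm i
    j ≠ Fin.last d ∧ (S c' c (d - j) ∨ S c c' (d - j))

theorem treeModelGraph_adj_iff (S : Fin m → Fin m → ℕ → Prop) {f : α → Fin d → ℕ}
    (hf : Function.Injective f) (col : α → Fin m) (x y : α) :
    (treeModelGraph S f col).Adj x y ↔
      colourLevel (col x) (prefLevel (f x) (f y)) ∈ adjLabels S (col y) := by
  simp [treeModelGraph, adjLabels, colourLevel, prefLevel_eq_last_iff, hf.ne_iff,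
    prefLen_comm (f y)]

end Labels

theorem linCW_treeModelGraph_succ {d m : ℕ} (S : Fin m → Fin m → ℕ → Prop) :
    ∀ (n : ℕ) (f : Fin (n + 1) → Fin d → ℕ), StrictMono (toLex ∘ f) →
      ∀ col : Fin (n + 1) → Fin m,
      LinCW (m * (d + 1)) (n + 1) (treeModelGraph S f col)
        fun v => colourLevel (col v) (prefLevel (f v) (f (Fin.last n)))
  | 0, f, _, col => by
    convert LinCW.single (colourLevel (col 0) (prefLevel (f 0) (f 0))) using 1
    · ext u v
      simp [treeModelGraph, Subsingleton.elim (α := Fin 1) u v]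
    · funext v
      rw [Subsingleton.elim (α := Fin 1) v 0]
      rfl
  | n + 1, f, hf, col => by
    have hinj : Function.Injective f := hf.injective.of_comp
    set L := Fin.last (n + 1)
    set lab : Fin (n + 2) → Fin (m * (d + 1)) :=
      fun v => colourLevel (col v) (prefLevel (f v) (f L))
    set oldLab : Fin (n + 1) → Fin (m * (d + 1)) :=
      fun v => colourLevel (col v.castSucc) (prefLevel (f v.castSucc) (f (Fin.last n).castSucc))
    have old : LinCW _ _ (treeModelGraph S (f ∘ Fin.castSucc) (col ∘ Fin.castSucc)) oldLab :=
      linCW_treeModelGraph_succ S n _ (hf.comp Fin.strictMono_castSucc) _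
    set p := prefLevel (f (Fin.last n).castSucc) (f L)
    have relabelled : truncLevel p ∘ oldLab = Fin.init lab := by
      funext v
      simp only [Function.comp_apply, truncLevel_colourLevel, Fin.init, lab, oldLab]
      congr 1
      ext
      simp only [Fin.coe_min, coe_prefLevel]
      exact (prefLen_eq_min_of_toLex_le
        (hf.monotone (Fin.castSucc_le_castSucc_iff.2 (Fin.le_last v)))
        (hf.monotone (Fin.le_last _))).symm
    have added := (old.relabel_of_idempotent (truncLevel p) (truncLevel_idem p)).addVertex (lab L)
    rw [relabelled, Fin.snoc_init_self, treeModelGraph_comp S f col (Fin.castSucc_injective _)]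
      at added
    convert added.addEdges_finset (lab L) (adjLabels S (col L)) ?_ using 1
    · have hlabL : ∀ y, lab y = lab L ↔ y = L := fun y => by
        simp only [lab, colourLevel_inj, prefLevel_self, prefLevel_eq_last_iff, hinj.eq_iff,
          and_iff_right_iff_imp]
        rintro rfl
        rfl
      conv_lhs => rw [← (treeModelGraph S f col).map_comap_castSucc_sup_fromRel]
      congr 2
      funext x y
      rw [hlabL]
      exact propext (and_congr_left fun hy => hy ▸ treeModelGraph_adj_iff S hinj col x L)
    · exact fun h => ((treeModelGraph_adj_iff S hinj col L L).2 h).ne rfl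

theorem exists_linCW_treeModelGraph {d m n : ℕ} (S : Fin m → Fin m → ℕ → Prop)
    (f : Fin n → Fin d → ℕ) (hf : StrictMono (toLex ∘ f)) (col : Fin n → Fin m) :
    ∃ lab, LinCW (m * (d + 1)) n (treeModelGraph S f col) lab := by
  cases n with
  | zero =>
    refine ⟨Fin.elim0, ?_⟩
    convert LinCW.empty using 1
    ext u
    exact u.elim0
  | succ n => exact ⟨_, linCW_treeModelGraph_succ S n f hf col⟩

/-- Every graph in `TM(d,m)` has linear clique-width at most `m(d+1)`. -/
theorem stmt_8 (d m : ℕ) {V : Type} [Fintype V] (G : SimpleGraph V)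
    (h : InTM d m G) : LinCWle G (m * (d + 1)) := by
  obtain ⟨tm⟩ := h
  let _ : LinearOrder V := LinearOrder.lift' (toLex ∘ tm.f) (toLex.injective.comp tm.inj)
  let e := monoEquivOfFin V rfl
  obtain ⟨lab, hlab⟩ := exists_linCW_treeModelGraph tm.S (tm.f ∘ e)
    (fun _ _ hab => e.strictMono hab) (tm.col ∘ e)
  refine ⟨_, _, lab, hlab, ⟨?_⟩⟩
  rw [treeModelGraph_comp tm.S tm.f tm.col e.injective, ← tm.eq_treeModelGraph]
  exact (SimpleGraph.Iso.comap e.toEquiv G).symm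
end

section
/- For ℓ = 3·2^m − 4 and every d, the path P_{ℓ+1} of length ℓ+1 has no tree-model with m colours (of any depth d), i.e., P_{3·2^m − 3} ∉ TM(d,m) for all d. -/
theorem Nat.findGreatest_succ_eq_findGreatest_add_one {P Q : ℕ → Prop} [DecidablePred P]
    [DecidablePred Q] (hPQ : ∀ k, P (k + 1) ↔ Q k) (hQ : Q 0) (n : ℕ) :
    Nat.findGreatest P (n + 1) = Nat.findGreatest Q n + 1 := by
  induction n with
  | zero => simp [hPQ, hQ]
  | succ n ih =>
    rw [Nat.findGreatest_succ, ih, Nat.findGreatest_succ]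
    simp only [hPQ]
    split_ifs <;> rfl

theorem prefLen_eq_zero_of_ne {d : ℕ} {f g : Fin (d + 1) → ℕ} (h : f 0 ≠ g 0) :
    prefLen f g = 0 :=
  Nat.findGreatest_eq_zero_iff.2 fun _ hk _ hP => h (hP 0 hk)

theorem prefLen_eq_prefLen_tail_add_one {d : ℕ} {f g : Fin (d + 1) → ℕ} (h : f 0 = g 0) :
    prefLen f g = prefLen (Fin.tail f) (Fin.tail g) + 1 := by
  refine Nat.findGreatest_succ_eq_findGreatest_add_one (fun k => ?_) (by simp) d
  refine ⟨fun hk i hi => hk i.succ (by simpa using hi), fun hk i hi => ?_⟩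
  cases i using Fin.cases with
  | zero => exact h
  | succ i => exact hk i (by simpa using hi)

theorem Nat.exists_apply_ne_apply_succ_of_ne {β : Type*} {g : ℕ → β} {s t u v : ℕ}
    (hu : u ∈ Set.Ico s t) (hv : v ∈ Set.Ico s t) (h : g u ≠ g v) :
    ∃ k, k ∈ Set.Ico s t ∧ k + 1 ∈ Set.Ico s t ∧ g k ≠ g (k + 1) := by
  by_contra! hconst
  have hs : ∀ x ∈ Set.Ico s t, g x = g s := by
    rintro x ⟨hsx, hxt⟩
    induction x, hsx using Nat.le_induction with
    | base => rfl
    | succ x hsx ih => rw [← hconst x ⟨hsx, by omega⟩ ⟨by omega, hxt⟩, ih (by omega)]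
  exact h ((hs u hu).trans (hs v hv).symm)

theorem Nat.exists_subset_Ico_of_forall_lt_add {X : Set ℕ} {n : ℕ}
    (h : ∀ x ∈ X, ∀ y ∈ X, y < x + n) : ∃ p, X ⊆ Set.Ico p (p + n) := by
  rcases X.eq_empty_or_nonempty with rfl | hX
  · exact ⟨0, Set.empty_subset _⟩
  · exact ⟨sInf X, fun x hx => ⟨Nat.sInf_le hx, h _ (Nat.sInf_mem hX) x hx⟩⟩

theorem Set.ncard_image_add_ncard_le {α C : Type*} {col : α → C} {I J : Set α} {B : Set C}
    (hI : I.Finite) (hJI : J ⊆ I) (hB : B ⊆ col '' I) (hJB : ∀ x ∈ J, col x ∉ B) :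
    (col '' J).ncard + B.ncard ≤ (col '' I).ncard := by
  have hfin := hI.image col
  have hdisj : Disjoint (col '' J) B := by
    rw [Set.disjoint_left]
    rintro _ ⟨x, hx, rfl⟩
    exact hJB x hx
  rw [← Set.ncard_union_eq hdisj ((hI.subset hJI).image col) (hfin.subset hB)]
  exact Set.ncard_le_ncard (Set.union_subset (Set.image_mono hJI) hB) hfin

theorem three_mul_two_pow_succ_sub_three (m : ℕ) :
    3 * 2 ^ (m + 1) - 3 = 2 * (3 * 2 ^ m - 3) + 3 := by
  have := Nat.one_le_two_pow (n := m)
  rw [pow_succ]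
  omega

theorem three_mul_three_mul_two_pow_sub_three_add_eight_le (m : ℕ) :
    3 * (3 * 2 ^ m - 3) + 8 ≤ 3 * 2 ^ (m + 2) - 3 := by
  have := Nat.one_le_two_pow (n := m)
  rw [pow_add]
  omega

theorem sub_le_of_subset_Ico {P : ℕ → Prop} {s t p w L : ℕ}
    (hfree : ∀ s' t', s ≤ s' → t' ≤ t → (∀ x ∈ Set.Ico s' t', ¬ P x) → t' - s' ≤ L)
    (hwin : {x ∈ Set.Ico s t | P x} ⊆ Set.Ico p (p + w)) : t - s ≤ 2 * L + w := by
  have hwin' : ∀ x, s ≤ x → x < t → P x → p ≤ x ∧ x < p + w :=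
    fun x hsx hxt hPx => hwin ⟨⟨hsx, hxt⟩, hPx⟩
  have h1 := hfree s (min p t) le_rfl (min_le_right _ _) fun x ⟨hsx, hxt⟩ hPx => by
    have := hwin' x hsx (by omega) hPx; omega
  have h2 := hfree (max (p + w) s) t (le_max_right _ _) le_rfl fun x ⟨hsx, hxt⟩ hPx => by
    have := hwin' x (by omega) hxt hPx; omega
  omega

theorem sub_le_of_subset_Ico_union_Ico {P : ℕ → Prop} {s t p q w L : ℕ} (hpq : p ≤ q)
    (hfree : ∀ s' t', s ≤ s' → t' ≤ t → (∀ x ∈ Set.Ico s' t', ¬ P x) → t' - s' ≤ L)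
    (hwin : {x ∈ Set.Ico s t | P x} ⊆ Set.Ico p (p + w) ∪ Set.Ico q (q + w)) :
    t - s ≤ 3 * L + 2 * w := by
  have hwin' : ∀ x, s ≤ x → x < t → P x → (p ≤ x ∧ x < p + w) ∨ (q ≤ x ∧ x < q + w) :=
    fun x hsx hxt hPx => hwin ⟨⟨hsx, hxt⟩, hPx⟩
  have h1 := hfree s (min p t) le_rfl (min_le_right _ _) fun x ⟨hsx, hxt⟩ hPx => by
    have := hwin' x hsx (by omega) hPx; omega
  have h2 := hfree (max (p + w) s) (min q t) (le_max_right _ _) (min_le_right _ _)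
    fun x ⟨hsx, hxt⟩ hPx => by have := hwin' x (by omega) (by omega) hPx; omega
  have h3 := hfree (max (q + w) s) t (le_max_right _ _) le_rfl fun x ⟨hsx, hxt⟩ hPx => by
    have := hwin' x (by omega) hxt hPx; omega
  omega

section CrossAdjacent

variable {β C : Type*}

def CrossAdjacent (I : Set ℕ) (col : ℕ → C) (g : ℕ → β) (a b : C) : Prop :=
  ∀ x ∈ I, ∀ y ∈ I, col x = a → col y = b → g x ≠ g y → x + 1 = y ∨ y + 1 = x

variable {I : Set ℕ} {col : ℕ → C} {g : ℕ → β} {a b : C}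

theorem CrossAdjacent.symm (h : CrossAdjacent I col g a b) : CrossAdjacent I col g b a :=
  fun x hx y hy hxb hya hxy => (h y hy x hx hya hxb (Ne.symm hxy)).symm

theorem CrossAdjacent.exists_subset_Ico_of_self (h : CrossAdjacent I col g a a) {k : ℕ}
    (hk : k ∈ I) (hk' : k + 1 ∈ I) (hka : col k = a) (hka' : col (k + 1) = a)
    (hg : g k ≠ g (k + 1)) : ∃ p, {x ∈ I | col x = a} ⊆ Set.Ico p (p + 3) := by
  have near : ∀ x ∈ I, col x = a → (k ≤ x + 1 ∧ x ≤ k + 2) ∧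
      (x + 1 = k → g x = g (k + 1)) ∧ (x = k + 2 → g x = g k) := by
    intro x hx hxa
    have adj_k := h x hx k hk hxa hka
    have adj_k' := h x hx (k + 1) hk' hxa hka'
    refine ⟨?_, fun hxk => not_not.1 fun hne => ?_, fun hxk => not_not.1 fun hne => ?_⟩
    · by_cases hxk : g x = g k
      · have := adj_k' (hxk ▸ hg)
        omega
      · have := adj_k hxk
        omega
    · have := adj_k' hne
      omega
    · have := adj_k hne
      omega
  -- `k - 1` and `k + 2` cannot both carry `a`: they would lie in different root classes
  by_cases hlow : ∃ x ∈ I, col x = a ∧ x + 1 = k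
  · obtain ⟨x, hx, hxa, rfl⟩ := hlow
    refine ⟨x, fun y ⟨hy, hya⟩ => ⟨by have := (near y hy hya).1.1; omega, ?_⟩⟩
    refine Nat.lt_of_le_of_ne (near y hy hya).1.2 fun hyx => ?_
    have hgxy : g x ≠ g y := by
      rw [(near x hx hxa).2.1 rfl, (near y hy hya).2.2 (by omega)]
      exact hg.symm
    have := h x hx y hy hxa hya hgxy
    omega
  · refine ⟨k, fun y ⟨hy, hya⟩ => ?_⟩
    obtain ⟨⟨h1, h2⟩, -⟩ := near y hy hya
    have : y + 1 ≠ k := fun hyk => hlow ⟨y, hy, hya, hyk⟩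
    exact ⟨by omega, by omega⟩

theorem CrossAdjacent.eq_or_eq_of_far (h : CrossAdjacent I col g a b) {w w' z : ℕ} (hw : w ∈ I)
    (hw' : w' ∈ I) (hwb : col w = b) (hwb' : col w' = b) (hww : w + 3 ≤ w') (hz : z ∈ I)
    (hza : col z = a) : g z = g w ∨ g z = g w' := by
  by_contra! hne
  have := h z hz w hw hza hwb hne.1
  have := h z hz w' hw' hza hwb' hne.2
  omega

theorem CrossAdjacent.ne_of_far (h : CrossAdjacent I col g a b) {u u' w w' x y : ℕ}
    (hu : u ∈ I) (hu' : u' ∈ I) (hua : col u = a) (hua' : col u' = a) (huu : u + 3 ≤ u')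
    (hw : w ∈ I) (hw' : w' ∈ I) (hwb : col w = b) (hwb' : col w' = b) (hww : w + 3 ≤ w')
    (hx : x ∈ I) (hy : y ∈ I) (hxa : col x = a) (hyb : col y = b) (hxy : g x ≠ g y) :
    g w ≠ g w' := by
  intro hgw
  have hclass : ∀ z ∈ I, col z = a → g z = g w := fun z hz hza =>
    (h.eq_or_eq_of_far hw hw' hwb hwb' hww hz hza).elim id (·.trans hgw.symm)
  have := h u hu y hy hua hyb (hclass u hu hua ▸ hclass x hx hxa ▸ hxy)
  have := h u' hu' y hy hua' hyb (hclass u' hu' hua' ▸ hclass x hx hxa ▸ hxy)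
  omega

theorem CrossAdjacent.adj_or_adj (h : CrossAdjacent I col g a b) {w w' z : ℕ} (hw : w ∈ I)
    (hw' : w' ∈ I) (hwb : col w = b) (hwb' : col w' = b) (hgw : g w ≠ g w') (hz : z ∈ I)
    (hza : col z = a) : (z + 1 = w ∨ w + 1 = z) ∨ (z + 1 = w' ∨ w' + 1 = z) := by
  by_cases hzw : g z = g w
  · exact Or.inr (h z hz w' hw' hza hwb' (hzw ▸ hgw))
  · exact Or.inl (h z hz w hw hza hwb hzw)

theorem CrossAdjacent.exists_subset_Ico_union_Ico_of_far (h : CrossAdjacent I col g a b)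
    {u u' w w' x y : ℕ}
    (hu : u ∈ I) (hu' : u' ∈ I) (hua : col u = a) (hua' : col u' = a) (huu : u + 3 ≤ u')
    (hw : w ∈ I) (hw' : w' ∈ I) (hwb : col w = b) (hwb' : col w' = b) (hww : w + 3 ≤ w')
    (hx : x ∈ I) (hy : y ∈ I) (hxa : col x = a) (hyb : col y = b) (hxy : g x ≠ g y) :
    ∃ p q, p ≤ q ∧
      {z ∈ I | col z = a ∨ col z = b} ⊆ Set.Ico p (p + 4) ∪ Set.Ico q (q + 4) := by
  have hgw := h.ne_of_far hu hu' hua hua' huu hw hw' hwb hwb' hww hx hy hxa hyb hxy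
  have hgu := h.symm.ne_of_far hw hw' hwb hwb' hww hu hu' hua hua' huu hy hx hyb hxa hxy.symm
  -- `u, w` and `u', w'` lie in different root classes, so they are path edges
  have hpair : g u ≠ g w ∧ g u' ≠ g w' := by
    rcases h.eq_or_eq_of_far hw hw' hwb hwb' hww hu hua with h1 | h1 <;>
      rcases h.eq_or_eq_of_far hw hw' hwb hwb' hww hu' hua' with h2 | h2
    · exact absurd (h1.trans h2.symm) hgu
    · have := h u hu w' hw' hua hwb' (h1 ▸ hgw)
      have := h u' hu' w hw hua' hwb (h2 ▸ hgw.symm)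
      omega
    · exact ⟨h1 ▸ hgw.symm, h2 ▸ hgw⟩
    · exact absurd (h1.trans h2.symm) hgu
  have huw := h u hu w hw hua hwb hpair.1
  have huw' := h u' hu' w' hw' hua' hwb' hpair.2
  refine ⟨min u w - 1, min u' w' - 1, by omega, fun z ⟨hz, hzab⟩ => ?_⟩
  simp only [Set.mem_union, Set.mem_Ico]
  rcases hzab with hza | hzb
  · have := h.adj_or_adj hw hw' hwb hwb' hgw hz hza
    omega
  · have := h.symm.adj_or_adj hu hu' hua hua' hgu hz hzb
    omega

theorem CrossAdjacent.exists_subset_Ico (h : CrossAdjacent I col g a b) {k : ℕ}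
    (hk : k ∈ I) (hk' : k + 1 ∈ I) (hka : col k = a) (hkb : col (k + 1) = b)
    (hg : g k ≠ g (k + 1)) :
    (∃ p, {x ∈ I | col x = a} ⊆ Set.Ico p (p + 3)) ∨
      (∃ p, {x ∈ I | col x = b} ⊆ Set.Ico p (p + 3)) ∨
      (a ≠ b ∧ ∃ p q, p ≤ q ∧
        {x ∈ I | col x = a ∨ col x = b} ⊆ Set.Ico p (p + 4) ∪ Set.Ico q (q + 4)) := by
  by_cases hab : a = b
  · subst hab
    exact Or.inl (h.exists_subset_Ico_of_self hk hk' hka hkb hg)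
  by_cases hfa : ∃ u ∈ I, ∃ u' ∈ I, col u = a ∧ col u' = a ∧ u + 3 ≤ u'
  · by_cases hfb : ∃ w ∈ I, ∃ w' ∈ I, col w = b ∧ col w' = b ∧ w + 3 ≤ w'
    · obtain ⟨u, hu, u', hu', hua, hua', huu⟩ := hfa
      obtain ⟨w, hw, w', hw', hwb, hwb', hww⟩ := hfb
      exact Or.inr (Or.inr ⟨hab,
        h.exists_subset_Ico_union_Ico_of_far hu hu' hua hua' huu hw hw' hwb hwb' hww hk hk' hka hkb hg⟩)
    · push Not at hfb
      exact Or.inr (Or.inl (Nat.exists_subset_Ico_of_forall_lt_add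
        fun w ⟨hw, hwb⟩ w' ⟨hw', hwb'⟩ => hfb w hw w' hw' hwb hwb'))
  · push Not at hfa
    exact Or.inl (Nat.exists_subset_Ico_of_forall_lt_add
      fun u ⟨hu, hua⟩ u' ⟨hu', hua'⟩ => hfa u hu u' hu' hua hua')

end CrossAdjacent

/-- A depth-`d` tree-model of the subgraph of the path `0 - 1 - 2 - ⋯` induced on `I`. Colours
range over an arbitrary type, so that a subpath may use fewer of them. -/
structure IsPathTreeModel {C : Type*} (d : ℕ) (f : ℕ → Fin d → ℕ) (col : ℕ → C)
    (S : C → C → ℕ → Prop) (I : Set ℕ) : Prop where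
  injOn : Set.InjOn f I
  adj_iff : ∀ u ∈ I, ∀ v ∈ I, u ≠ v →
    ((u + 1 = v ∨ v + 1 = u) ↔ S (col u) (col v) (d - prefLen (f u) (f v)))

namespace IsPathTreeModel

variable {C : Type*} {d : ℕ} {col : ℕ → C} {S : C → C → ℕ → Prop} {I : Set ℕ}

theorem mono {f : ℕ → Fin d → ℕ} {J : Set ℕ} (h : IsPathTreeModel d f col S I) (hJ : J ⊆ I) :
    IsPathTreeModel d f col S J :=
  ⟨h.injOn.mono hJ, fun u hu v hv => h.adj_iff u (hJ hu) v (hJ hv)⟩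

theorem subsingleton {f : ℕ → Fin 0 → ℕ} (h : IsPathTreeModel 0 f col S I) : I.Subsingleton :=
  fun _ hu _ hv => h.injOn hu hv (Subsingleton.elim _ _)

theorem tail {f : ℕ → Fin (d + 1) → ℕ} (h : IsPathTreeModel (d + 1) f col S I)
    (hroot : ∀ u ∈ I, ∀ v ∈ I, f u 0 = f v 0) :
    IsPathTreeModel d (fun u => Fin.tail (f u)) col S I := by
  refine ⟨fun u hu v hv huv => h.injOn hu hv ?_, fun u hu v hv huv => ?_⟩
  · rw [← Fin.cons_self_tail (f u), ← Fin.cons_self_tail (f v), hroot u hu v hv]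
    exact congrArg _ huv
  · rw [h.adj_iff u hu v hv huv, prefLen_eq_prefLen_tail_add_one (hroot u hu v hv),
      Nat.add_sub_add_right]

theorem crossAdjacent {f : ℕ → Fin (d + 1) → ℕ} (h : IsPathTreeModel (d + 1) f col S I) {k : ℕ}
    (hk : k ∈ I) (hk' : k + 1 ∈ I) (hg : f k 0 ≠ f (k + 1) 0) :
    CrossAdjacent I col (fun u => f u 0) (col k) (col (k + 1)) := by
  have top : ∀ x ∈ I, ∀ y ∈ I, f x 0 ≠ f y 0 →
      ((x + 1 = y ∨ y + 1 = x) ↔ S (col x) (col y) (d + 1)) := fun x hx y hy hxy => by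
    simpa [prefLen_eq_zero_of_ne hxy] using h.adj_iff x hx y hy (fun e => hxy (e ▸ rfl))
  intro x hx y hy hxk hyk hxy
  rw [top x hx y hy hxy, hxk, hyk]
  exact (top k hk (k + 1) hk' hg).1 (Or.inl rfl)

theorem sub_le_of_depth_zero {f : ℕ → Fin 0 → ℕ} {s t m : ℕ}
    (h : IsPathTreeModel 0 f col S (Set.Ico s t)) (hm : (col '' Set.Ico s t).ncard ≤ m) :
    t - s ≤ 3 * 2 ^ m - 3 := by
  rcases le_or_gt t s with hts | hst
  · omega
  have hm0 : 0 < m := hm.trans_lt' <|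
    (Set.ncard_pos ((Set.finite_Ico s t).image col)).2 ⟨col s, s, ⟨le_rfl, hst⟩, rfl⟩
  have := Nat.one_lt_two_pow hm0.ne'
  have : t ≤ s + 1 := not_lt.1 fun hst' =>
    absurd (h.subsingleton ⟨le_rfl, hst⟩ ⟨by omega, hst'⟩) (by omega)
  omega

theorem sub_le {d : ℕ} {f : ℕ → Fin d → ℕ} {s t m : ℕ}
    (h : IsPathTreeModel d f col S (Set.Ico s t)) (hm : (col '' Set.Ico s t).ncard ≤ m) :
    t - s ≤ 3 * 2 ^ m - 3 := by
  induction m using Nat.strong_induction_on generalizing d s t with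
  | _ m IHm =>
  induction d generalizing s t with
  | zero => exact h.sub_le_of_depth_zero hm
  | succ d IHd =>
  by_cases hroot : ∀ u ∈ Set.Ico s t, ∀ v ∈ Set.Ico s t, f u 0 = f v 0
  · exact IHd (h.tail hroot) hm
  push Not at hroot
  obtain ⟨u, hu, v, hv, huv⟩ := hroot
  obtain ⟨k, hk, hk', hg⟩ :=
    Nat.exists_apply_ne_apply_succ_of_ne (g := fun u => f u 0) hu hv huv
  have hfin := (Set.finite_Ico s t).image col
  have free : ∀ B ⊆ col '' Set.Ico s t, 0 < B.ncard → ∀ s' t', s ≤ s' → t' ≤ t →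
      (∀ x ∈ Set.Ico s' t', col x ∉ B) → t' - s' ≤ 3 * 2 ^ (m - B.ncard) - 3 := by
    intro B hB hB0 s' t' hs ht hfree
    have hJ := Set.Ico_subset_Ico hs ht
    have := Set.ncard_image_add_ncard_le (Set.finite_Ico s t) hJ hB hfree
    exact IHm _ (by omega) (h.mono hJ) (by omega)
  have one_colour : ∀ x ∈ Set.Ico s t, ∀ p,
      {y ∈ Set.Ico s t | col y = col x} ⊆ Set.Ico p (p + 3) → t - s ≤ 3 * 2 ^ m - 3 := by
    intro x hx p hp
    have hB : {col x} ⊆ col '' Set.Ico s t := Set.singleton_subset_iff.2 ⟨x, hx, rfl⟩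
    have hB1 := Set.ncard_singleton (col x)
    have hlen := sub_le_of_subset_Ico (free _ hB (by omega)) hp
    obtain ⟨m, rfl⟩ := Nat.exists_eq_add_of_le' (hB1 ▸ (Set.ncard_le_ncard hB hfin).trans hm)
    rw [hB1, Nat.add_sub_cancel] at hlen
    rwa [three_mul_two_pow_succ_sub_three]
  rcases (h.crossAdjacent hk hk' hg).exists_subset_Ico hk hk' rfl rfl hg with
    ⟨p, hp⟩ | ⟨p, hp⟩ | ⟨hab, p, q, hpq, hp⟩
  · exact one_colour k hk p hp
  · exact one_colour (k + 1) hk' p hp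
  · have hB : {col k, col (k + 1)} ⊆ col '' Set.Ico s t :=
      Set.insert_subset ⟨k, hk, rfl⟩ (Set.singleton_subset_iff.2 ⟨k + 1, hk', rfl⟩)
    have hB2 := Set.ncard_pair hab
    have hlen := sub_le_of_subset_Ico_union_Ico hpq (free _ hB (by omega)) hp
    obtain ⟨m, rfl⟩ := Nat.exists_eq_add_of_le' (hB2 ▸ (Set.ncard_le_ncard hB hfin).trans hm)
    rw [hB2, Nat.add_sub_cancel] at hlen
    have := three_mul_three_mul_two_pow_sub_three_add_eight_le m
    omega

end IsPathTreeModel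

theorem TreeModel.isPathTreeModel {n d m : ℕ}
    (M : TreeModel (SimpleGraph.pathGraph (n + 1)) d m) :
    IsPathTreeModel d (fun k => M.f (Fin.ofNat (n + 1) k)) (fun k => M.col (Fin.ofNat (n + 1) k))
      M.S (Set.Ico 0 (n + 1)) := by
  have hval : ∀ k ∈ Set.Ico 0 (n + 1), (Fin.ofNat (n + 1) k : ℕ) = k :=
    fun k hk => Nat.mod_eq_of_lt hk.2
  refine ⟨fun u hu v hv huv => ?_, fun u hu v hv huv => ?_⟩
  · rw [← hval u hu, ← hval v hv, M.inj huv]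
  · rw [← M.adj _ _ fun e => huv (by rw [← hval u hu, e, hval v hv]), SimpleGraph.pathGraph_adj,
      hval u hu, hval v hv]

/-- For `ℓ = 3·2^m − 4`, the path `P_{ℓ+1}` of length `ℓ+1 = 3·2^m − 3` has no
tree-model with `m` colours of any depth `d`. -/
theorem stmt_13 (m d : ℕ) :
    ¬ InTM d m (SimpleGraph.pathGraph (3 * 2 ^ m - 3 + 1)) := by
  rintro ⟨M⟩
  have := M.isPathTreeModel.sub_le ((Set.ncard_le_card _).trans_eq (Nat.card_fin m))
  omega
end
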